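/- arXiv:1708.09156 — 3 statements merged into one kernel-verified Lean document; each statement's English description precedes it below -/
import Mathlib

section
/- For every n ≥ 1 and every matrix ρ ∈ M_{2^n}(ℂ), (1/4^n) · Σ_{a,b ∈ {0,1}^n} (X^a Z^b) ρ (X^a Z^b)† = (tr(ρ)/2^n) · I_{2^n}. In particular, for a density matrix ρ (tr ρ = 1), the quantum one-time pad with uniformly random keys maps ρ to the maximally mixed state I_{2^n}/2^n. -/
open Matrix Kronecker BigOperators

namespace Paper

noncomputable section

/-- The Pauli X matrix. -/
def X : Matrix (Fin 2) (Fin 2) ℂ := !![0, 1; 1, 0]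

/-- The Pauli Z matrix. -/
def Z : Matrix (Fin 2) (Fin 2) ℂ := !![1, 0; 0, -1]

/-- The n-fold Kronecker product `⊗ᵢ M^(a i)`, rows/columns indexed by `Fin n → Fin 2`. -/
def pauliPow (M : Matrix (Fin 2) (Fin 2) ℂ) {n : ℕ} (a : Fin n → Fin 2) :
    Matrix (Fin n → Fin 2) (Fin n → Fin 2) ℂ :=
  Matrix.of fun r c => ∏ i, (M ^ (a i : ℕ)) (r i) (c i)

/-- `X^a` for a bit string `a ∈ {0,1}^n`. -/
def Xs {n : ℕ} (a : Fin n → Fin 2) : Matrix (Fin n → Fin 2) (Fin n → Fin 2) ℂ := pauliPow X a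

/-- `Z^b` for a bit string `b ∈ {0,1}^n`. -/
def Zs {n : ℕ} (b : Fin n → Fin 2) : Matrix (Fin n → Fin 2) (Fin n → Fin 2) ℂ := pauliPow Z b

lemma X_pow_apply (k r c : Fin 2) : (X ^ (k:ℕ)) r c = if c = r + k then 1 else 0 := by
  fin_cases k <;> fin_cases r <;> fin_cases c <;> simp [X, pow_succ, Matrix.one_apply]

lemma Z_pow_apply (k r c : Fin 2) :
    (Z ^ (k:ℕ)) r c = (if r = c then 1 else 0) * (-1:ℂ)^((k:ℕ)*(r:ℕ)) := by
  fin_cases k <;> fin_cases r <;> fin_cases c <;> simp [Z, pow_succ, Matrix.one_apply]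

def sgn {n : ℕ} (b r : Fin n → Fin 2) : ℂ := ∏ i, (-1:ℂ)^((b i : ℕ) * (r i : ℕ))

lemma Xs_apply {n : ℕ} (a r c : Fin n → Fin 2) :
    Xs a r c = if c = r + a then 1 else 0 := by
  have : Xs a r c = ∏ i, (if c i = r i + a i then (1:ℂ) else 0) := by
    simp only [Xs, pauliPow, Matrix.of_apply, X_pow_apply]
  rw [this, Finset.prod_boole]
  congr 1
  simp [funext_iff, eq_iff_iff]

lemma Zs_apply {n : ℕ} (b r c : Fin n → Fin 2) :
    Zs b r c = (if r = c then 1 else 0) * sgn b r := by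
  have : Zs b r c = ∏ i, ((if r i = c i then (1:ℂ) else 0) * (-1:ℂ)^((b i:ℕ)*(r i:ℕ))) := by
    simp only [Zs, pauliPow, Matrix.of_apply, Z_pow_apply]
  rw [this, Finset.prod_mul_distrib, Finset.prod_boole]
  congr 1
  · congr 1
    simp [funext_iff, eq_iff_iff]

lemma XZ_apply {n : ℕ} (a b r c : Fin n → Fin 2) :
    (Xs a * Zs b) r c = if c = r + a then sgn b c else 0 := by
  rw [Matrix.mul_apply]
  have : ∀ p, Xs a r p * Zs b p c = if p = r + a then Zs b (r + a) c else 0 := by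
    intro p
    rw [Xs_apply]
    by_cases h : p = r + a <;> simp [h]
  simp only [this, Finset.sum_ite_eq' Finset.univ, Finset.mem_univ, if_true]
  rw [Zs_apply]
  by_cases h : c = r + a <;> simp [h, eq_comm]

lemma sgn_real {n : ℕ} (b r : Fin n → Fin 2) : (starRingEnd ℂ) (sgn b r) = sgn b r := by
  simp [sgn, map_prod]

lemma conj_entry {n : ℕ} (a b r c : Fin n → Fin 2) (ρ : Matrix (Fin n → Fin 2) (Fin n → Fin 2) ℂ) :
    ((Xs a * Zs b) * ρ * (Xs a * Zs b)ᴴ) r c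
      = sgn b (r + a) * sgn b (c + a) * ρ (r + a) (c + a) := by
  rw [Matrix.mul_apply]
  have h1 : ∀ q, ((Xs a * Zs b) * ρ) r q = sgn b (r + a) * ρ (r + a) q := by
    intro q
    rw [Matrix.mul_apply]
    have : ∀ p, (Xs a * Zs b) r p * ρ p q
        = if p = r + a then sgn b (r + a) * ρ (r + a) q else 0 := by
      intro p
      rw [XZ_apply]
      by_cases h : p = r + a <;> simp [h]
    simp [this]
  have h2 : ∀ q, (starRingEnd ℂ) ((Xs a * Zs b) c q) = if q = c + a then sgn b (c + a) else 0 := by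
    intro q
    rw [XZ_apply]
    by_cases h : q = c + a <;> simp [h, sgn_real]
  have : ∀ q, ((Xs a * Zs b) * ρ) r q * (starRingEnd ℂ) ((Xs a * Zs b) c q)
      = if q = c + a then sgn b (r + a) * sgn b (c + a) * ρ (r + a) (c + a) else 0 := by
    intro q
    rw [h1, h2]
    by_cases h : q = c + a <;> simp [h] <;> ring
  simp [this]

lemma sum_sgn {n : ℕ} (u v : Fin n → Fin 2) :
    ∑ b : Fin n → Fin 2, sgn b u * sgn b v = if u = v then (2:ℂ)^n else 0 := by
  have key : ∀ b : Fin n → Fin 2, sgn b u * sgn b v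
      = ∏ i, ((-1:ℂ)^((b i:ℕ)*(u i:ℕ)) * (-1:ℂ)^((b i:ℕ)*(v i:ℕ))) := by
    intro b; rw [sgn, sgn, ← Finset.prod_mul_distrib]
  simp only [key]
  rw [← Fintype.prod_sum (κ := fun _ : Fin n => Fin 2)
    (f := fun i j => (-1:ℂ)^((j:ℕ)*(u i:ℕ)) * (-1:ℂ)^((j:ℕ)*(v i:ℕ)))]
  have pair : ∀ x y : Fin 2, (∑ j : Fin 2, (-1:ℂ)^((j:ℕ)*(x:ℕ)) * (-1:ℂ)^((j:ℕ)*(y:ℕ)))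
      = if x = y then 2 else 0 := by
    intro x y
    fin_cases x <;> fin_cases y <;> simp [Fin.sum_univ_two] <;> norm_num
  have per : ∀ i, (∑ j : Fin 2, (-1:ℂ)^((j:ℕ)*(u i:ℕ)) * (-1:ℂ)^((j:ℕ)*(v i:ℕ)))
      = if u i = v i then 2 else 0 := fun i => pair (u i) (v i)
  simp only [per]
  have : ∀ i, (if u i = v i then (2:ℂ) else 0) = (if u i = v i then (1:ℂ) else 0) * 2 := by
    intro i; split <;> ring
  simp only [this]
  rw [Finset.prod_mul_distrib, Finset.prod_boole, Finset.prod_const, Finset.card_univ,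
    Fintype.card_fin]
  by_cases h : u = v
  · simp [h]
  · have hc : ¬ ∀ i ∈ Finset.univ, u i = v i := by
      intro hall; exact h (funext fun i => hall i (Finset.mem_univ i))
    rw [if_neg hc, if_neg h, zero_mul]


/-- **Quantum one-time pad**: encryption with uniformly random Pauli keys maps any state to
(a multiple of) the maximally mixed state. -/
theorem qotp_maximally_mixed {n : ℕ} (hn : 1 ≤ n)
    (ρ : Matrix (Fin n → Fin 2) (Fin n → Fin 2) ℂ) :
    (1 / 4 ^ n : ℂ) •
        ∑ a : Fin n → Fin 2, ∑ b : Fin n → Fin 2,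
          (Xs a * Zs b) * ρ * (Xs a * Zs b)ᴴ =
      (ρ.trace / 2 ^ n) • (1 : Matrix (Fin n → Fin 2) (Fin n → Fin 2) ℂ) := by
  ext r c
  simp only [Matrix.smul_apply, Matrix.sum_apply, conj_entry, smul_eq_mul,
    Matrix.one_apply]
  have hb : ∀ a : Fin n → Fin 2,
      (∑ b : Fin n → Fin 2, sgn b (r + a) * sgn b (c + a) * ρ (r + a) (c + a))
        = (if r = c then (2:ℂ)^n else 0) * ρ (r + a) (c + a) := by
    intro a
    rw [← Finset.sum_mul, sum_sgn]
    congr 2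
    simp [add_left_inj]
  simp only [hb]
  by_cases h : r = c
  · subst h
    simp only [if_pos rfl]
    have ht : (∑ a : Fin n → Fin 2, ρ (r + a) (r + a)) = ρ.trace := by
      rw [Matrix.trace]
      exact Fintype.sum_equiv (Equiv.addLeft r) _ _ (fun a => rfl)
    rw [← Finset.mul_sum, ht]
    have h4 : (4:ℂ)^n = 2^n * 2^n := by rw [← mul_pow]; norm_num
    have h2 : (2:ℂ)^n ≠ 0 := pow_ne_zero _ two_ne_zero
    field_simp [h4]
    simp only [if_true, h4]
    ring
  · simp [h]

end

end Paper
end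

section
/- The magic-state circuit for the T gate is correct: let μ = T|+⟩⟨+|T† and let U be the 4×4 CNOT with control on the second tensor factor and target on the first (i.e., U maps |x⟩⊗|y⟩ to |x⊕y⟩⊗|y⟩). Set C₀ = I₂ and C₁ = P·X. Then for every matrix ρ ∈ M₂(ℂ): Σ_{m∈{0,1}} C_m (⟨m| ⊗ I₂) U (ρ ⊗ μ) U† (|m⟩ ⊗ I₂) C_m† = T ρ T†. -/
open Matrix Kronecker BigOperators

namespace Paper

noncomputable section

/-- The Hadamard matrix. -/
def H : Matrix (Fin 2) (Fin 2) ℂ := (Real.sqrt 2 : ℂ)⁻¹ • !![1, 1; 1, -1]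

/-- The standard basis vector `|x⟩` of `ℂ²`. -/
def ket (x : Fin 2) : Fin 2 → ℂ := fun i => if i = x then 1 else 0

/-- `|+⟩ = (|0⟩ + |1⟩)/√2`. -/
def plus : Fin 2 → ℂ := (Real.sqrt 2 : ℂ)⁻¹ • (ket 0 + ket 1)

/-- Kronecker product of vectors. -/
def vKron {α β : Type*} (u : α → ℂ) (v : β → ℂ) : α × β → ℂ := fun p => u p.1 * v p.2

/-- The CNOT gate (control on the first factor): `|x⟩⊗|y⟩ ↦ |x⟩⊗|y⊕x⟩`. -/
def CNOT : Matrix (Fin 2 × Fin 2) (Fin 2 × Fin 2) ℂ :=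
  Matrix.of fun r c => if r.1 = c.1 ∧ r.2 = c.2 + c.1 then 1 else 0

/-- The phase gate `P`. -/
def P : Matrix (Fin 2) (Fin 2) ℂ := !![1, 0; 0, Complex.I]

/-- The `T` gate (π/8 gate). -/
def T : Matrix (Fin 2) (Fin 2) ℂ := !![1, 0; 0, Complex.exp (Complex.I * (Real.pi / 4))]

/-- CNOT with control on the second factor and target on the first:
`|x⟩⊗|y⟩ ↦ |x⊕y⟩⊗|y⟩`. -/
def CNOT21 : Matrix (Fin 2 × Fin 2) (Fin 2 × Fin 2) ℂ :=
  Matrix.of fun r c => if r.1 = c.1 + c.2 ∧ r.2 = c.2 then 1 else 0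

/-- The operator `⟨m| ⊗ I₂ : ℂ²⊗ℂ² → ℂ²`, the bra acting on the first factor. -/
def braFst (m : Fin 2) : Matrix (Fin 2) (Fin 2 × Fin 2) ℂ :=
  Matrix.of fun r c => if c.1 = m ∧ c.2 = r then 1 else 0

lemma hsq : (Real.sqrt 2 : ℂ) * (Real.sqrt 2 : ℂ) = 2 := by
  norm_cast; exact Real.mul_self_sqrt (by norm_num)

lemma hne : (Real.sqrt 2 : ℂ) ≠ 0 := by norm_cast; positivity

lemma hstar : (starRingEnd ℂ) ((Real.sqrt 2 : ℂ))⁻¹ = ((Real.sqrt 2 : ℂ))⁻¹ := by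
  simp [Complex.conj_inv]

lemma ht : Complex.exp (Complex.I * (Real.pi/4)) = (Real.sqrt 2 : ℂ)⁻¹ * (1 + Complex.I) := by
  rw [mul_comm, Complex.exp_mul_I]
  rw [show ((Real.pi:ℂ)/4) = ((Real.pi/4 : ℝ) : ℂ) by push_cast; ring]
  rw [← Complex.ofReal_cos, ← Complex.ofReal_sin, Real.cos_pi_div_four, Real.sin_pi_div_four]
  have := hsq; have := hne
  field_simp
  push_cast
  linear_combination (1 + Complex.I) / 2 * hsq

lemma hmu : T * vecMulVec plus (star plus) * Tᴴ =
    (2:ℂ)⁻¹ • !![1, (Real.sqrt 2 : ℂ)⁻¹ * (1 - Complex.I);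
                 (Real.sqrt 2 : ℂ)⁻¹ * (1 + Complex.I), 1] := by
  ext i j
  fin_cases i <;> fin_cases j <;>
    · simp [Matrix.mul_apply, Fin.sum_univ_two, T, vecMulVec, plus, ket,
        Matrix.conjTranspose_apply, ht, hstar, Complex.conj_I, map_add, RingHom.map_one, Matrix.vecHead, Matrix.vecTail, Function.comp]
      field_simp
      ring_nf
      try simp only [Complex.I_sq]
      first
        | linear_combination -hsq
        | linear_combination ((Real.sqrt 2:ℂ) * (Complex.I - 1)) * hsq
        | linear_combination ((Real.sqrt 2:ℂ) * (1 - Complex.I)) * hsq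
        | (left; linear_combination (-(Real.sqrt 2:ℂ)) * hsq)
        | (have hinv : ((Real.sqrt 2:ℂ))⁻¹ * ((Real.sqrt 2:ℂ))⁻¹ = 2⁻¹ := by
             rw [← mul_inv, hsq]
           linear_combination (2 + 4 * ((Real.sqrt 2:ℂ))⁻¹ * ((Real.sqrt 2:ℂ))⁻¹) * hinv)
        | linear_combination (Complex.I - 1) * hsq
        | linear_combination (-1 - Complex.I) * hsq
        | linear_combination (-((Real.sqrt 2:ℂ) ^ 2 + 2)) * hsq
        | ring_nf

def B0 : Matrix (Fin 2) (Fin 2 × Fin 2) ℂ := Matrix.of fun r c => if c = (r, r) then 1 else 0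

def B1 : Matrix (Fin 2) (Fin 2 × Fin 2) ℂ :=
  Matrix.of fun r c => if c = (r, r + 1) then (if r = 0 then 1 else Complex.I) else 0

lemma hB0 : (1 : Matrix (Fin 2) (Fin 2) ℂ) * braFst 0 * CNOT21 = B0 := by
  ext r c
  simp only [Matrix.one_mul, Matrix.mul_apply, braFst, CNOT21, B0, Matrix.of_apply,
    Fintype.sum_prod_type, Fin.sum_univ_two]
  fin_cases r <;> fin_cases c <;> simp [Prod.ext_iff]

lemma hB1 : P * X * braFst 1 * CNOT21 = B1 := by
  ext r c
  simp only [Matrix.mul_apply, braFst, CNOT21, B1, P, X, Matrix.of_apply,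
    Fintype.sum_prod_type, Fin.sum_univ_two]
  fin_cases r <;> fin_cases c <;> simp [Prod.ext_iff] <;> norm_num [Matrix.mul_apply, Fin.sum_univ_two]

lemma reassoc (C : Matrix (Fin 2) (Fin 2) ℂ) (A : Matrix (Fin 2) (Fin 2 × Fin 2) ℂ)
    (M : Matrix (Fin 2 × Fin 2) (Fin 2 × Fin 2) ℂ) :
    C * A * CNOT21 * M * CNOT21ᴴ * Aᴴ * Cᴴ = (C * A * CNOT21) * M * (C * A * CNOT21)ᴴ := by
  simp only [Matrix.conjTranspose_mul, Matrix.mul_assoc]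

/-- **Correctness of the magic-state circuit for the T gate**: consuming the magic state
`μ = T|+⟩⟨+|T†`, applying CNOT (control on the magic state), measuring the first register,
and applying the correction `C₁ = P·X` on outcome 1, implements `ρ ↦ T ρ T†`. -/
theorem magic_state_T (ρ : Matrix (Fin 2) (Fin 2) ℂ) :
    (∑ m : Fin 2,
        (if m = 0 then (1 : Matrix (Fin 2) (Fin 2) ℂ) else P * X) * braFst m * CNOT21 *
          (ρ ⊗ₖ (T * vecMulVec plus (star plus) * Tᴴ)) * CNOT21ᴴ * (braFst m)ᴴ *
          (if m = 0 then (1 : Matrix (Fin 2) (Fin 2) ℂ) else P * X)ᴴ) =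
      T * ρ * Tᴴ := by
  rw [Fin.sum_univ_two]
  simp only [if_pos rfl, if_neg (show (1 : Fin 2) ≠ 0 by decide), if_true]
  rw [reassoc, reassoc, hB0, hB1, hmu]
  have hinv : ((Real.sqrt 2:ℂ))⁻¹ * ((Real.sqrt 2:ℂ))⁻¹ = 2⁻¹ := by rw [← mul_inv, hsq]
  have hpow : ((Real.sqrt 2:ℂ))⁻¹ ^ 2 = 2⁻¹ := by rw [sq, hinv]
  ext i j
  fin_cases i <;> fin_cases j <;>
    · simp [Matrix.mul_apply, Matrix.add_apply, Fintype.sum_prod_type, Fin.sum_univ_two,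
        Matrix.kroneckerMap_apply, B0, B1, T, Matrix.conjTranspose_apply, Prod.ext_iff,
        Complex.conj_I, ht, hstar, Matrix.smul_apply, smul_eq_mul, Matrix.vecMul, dotProduct]
      ring_nf
      try simp only [Complex.I_sq]
      try simp only [hpow]
      try ring


end

end Paper
end

section
/- The entangled-magic-state circuit for the Hadamard gate is correct: for every vector ψ ∈ ℂ² and all bits m₁, m₃ ∈ {0,1}, (⟨m₁|H ⊗ I₂ ⊗ ⟨m₃|) · CNOT₁₃ · (ψ ⊗ (H ⊗ I₂)|Φ⁺⟩) = (1/2) · Z^{m₃} X^{m₁} H ψ, where CNOT₁₃ is the 8×8 unitary on ℂ² ⊗ ℂ² ⊗ ℂ² mapping |x⟩⊗|y⟩⊗|z⟩ to |x⟩⊗|y⟩⊗|z⊕x⟩, the first measurement (outcome m₁) is in the Hadamard basis on the first qubit, and the second measurement (outcome m₃) is in the computational basis on the third qubit. -/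
open Matrix Kronecker BigOperators

namespace Paper

noncomputable section

/-- The Bell state `|Φ⁺⟩ = (|0⟩⊗|0⟩ + |1⟩⊗|1⟩)/√2`. -/
def bell : Fin 2 × Fin 2 → ℂ :=
  (Real.sqrt 2 : ℂ)⁻¹ • (vKron (ket 0) (ket 0) + vKron (ket 1) (ket 1))

/-- CNOT on `ℂ²⊗ℂ²⊗ℂ²` with control on qubit 1 and target on qubit 3:
`|x⟩⊗|y⟩⊗|z⟩ ↦ |x⟩⊗|y⟩⊗|z⊕x⟩`. -/
def CNOT13 : Matrix (Fin 2 × Fin 2 × Fin 2) (Fin 2 × Fin 2 × Fin 2) ℂ :=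
  Matrix.of fun r c =>
    if r.1 = c.1 ∧ r.2.1 = c.2.1 ∧ r.2.2 = c.2.2 + c.1 then 1 else 0

/-- The operator `⟨m₁|H ⊗ I₂ ⊗ ⟨m₃| : ℂ²⊗ℂ²⊗ℂ² → ℂ²`: a Hadamard-basis measurement
(outcome `m₁`) on qubit 1 and a computational-basis measurement (outcome `m₃`) on qubit 3. -/
def braHIbra (m₁ m₃ : Fin 2) : Matrix (Fin 2) (Fin 2 × Fin 2 × Fin 2) ℂ :=
  Matrix.of fun r c =>
    H m₁ c.1 * (if c.2.1 = r then 1 else 0) * (if c.2.2 = m₃ then 1 else 0)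

/-- **Correctness of the entangled-magic-state circuit for the Hadamard gate**: using the
magic state `(H ⊗ I₂)|Φ⁺⟩` and CNOT₁₃, a Hadamard-basis measurement on qubit 1 (outcome
`m₁`) and a computational-basis measurement on qubit 3 (outcome `m₃`) leave qubit 2 in the
state `½ Z^{m₃} X^{m₁} H ψ`. -/
theorem magic_state_H (ψ : Fin 2 → ℂ) (m₁ m₃ : Fin 2) :
    (braHIbra m₁ m₃ * CNOT13).mulVec
        (vKron ψ ((H ⊗ₖ (1 : Matrix (Fin 2) (Fin 2) ℂ)).mulVec bell)) =
      (1 / 2 : ℂ) • (Z ^ ((m₃ : ℕ)) * X ^ ((m₁ : ℕ)) * H).mulVec ψ := by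
  have h2 : (Real.sqrt 2 : ℂ)⁻¹ * (Real.sqrt 2 : ℂ)⁻¹ = 1/2 := by
    rw [← mul_inv]
    norm_cast
    rw [Real.mul_self_sqrt (by norm_num : (0:ℝ) ≤ 2)]
    norm_num
  obtain ⟨s, hs, hH, hbell⟩ : ∃ s : ℂ, s * s = 1/2 ∧ H = s • !![1,1;1,-1] ∧
      bell = s • (vKron (ket 0) (ket 0) + vKron (ket 1) (ket 1)) :=
    ⟨(Real.sqrt 2 : ℂ)⁻¹, h2, rfl, rfl⟩
  have hs2 : s ^ 2 = 1/2 := by rw [sq]; exact hs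
  have hs3 : s ^ 3 = s / 2 := by rw [pow_succ, hs2]; ring
  funext i
  fin_cases m₁ <;> fin_cases m₃ <;> fin_cases i <;>
    simp [Matrix.mulVec, Matrix.mul_apply, dotProduct, braHIbra, CNOT13, vKron, hH, hbell, ket,
      X, Z, Fintype.sum_prod_type, Fin.sum_univ_two, Matrix.kroneckerMap_apply,
      Matrix.one_apply, pow_succ, Matrix.smul_apply] <;>
    ring_nf <;> simp only [hs2, hs3] <;> ring

end

end Paper
end
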